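/- The map χ : (ℝⁿ × ℝⁿ \ {ξ = 0}) → (Sⁿ⁻¹ × ℝ) × (ℝⁿ × ℝ) defined by χ(x, ξ) = (ξ/‖ξ‖, (x·ξ)/‖ξ‖, -‖ξ‖x + ξ(x·ξ)/‖ξ‖, ‖ξ‖) is a bijection onto {(n, r, η, ηᵣ) : ‖n‖ = 1, n·η = 0, ηᵣ > 0}, with inverse given by χ⁻¹(n, r, η, ηᵣ) = (-(1/ηᵣ)η + r·n, ηᵣ·n). -/
import Mathlib


open scoped RealInnerProductSpace

/-- The contact transform induced by the sheaf-theoretic Radon transform. -/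
noncomputable def radonChi (n : ℕ) :
    EuclideanSpace ℝ (Fin n) × EuclideanSpace ℝ (Fin n) →
      (EuclideanSpace ℝ (Fin n) × ℝ) × (EuclideanSpace ℝ (Fin n) × ℝ) :=
  fun p =>
    ((‖p.2‖⁻¹ • p.2, ⟪p.1, p.2⟫ / ‖p.2‖),
      (-(‖p.2‖ • p.1) + (⟪p.1, p.2⟫ / ‖p.2‖) • p.2, ‖p.2‖))

/-- The claimed inverse of the Radon contact transform. -/
noncomputable def radonChiInv (n : ℕ) :
    (EuclideanSpace ℝ (Fin n) × ℝ) × (EuclideanSpace ℝ (Fin n) × ℝ) →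
      EuclideanSpace ℝ (Fin n) × EuclideanSpace ℝ (Fin n) :=
  fun q => (-(q.2.2⁻¹ • q.2.1) + q.1.2 • q.1.1, q.2.2 • q.1.1)

lemma radonChi_left (n : ℕ) :
    ∀ p : EuclideanSpace ℝ (Fin n) × EuclideanSpace ℝ (Fin n),
      p.2 ≠ 0 → radonChiInv n (radonChi n p) = p := by
  rintro ⟨x, ξ⟩ hξ
  have hn : ‖ξ‖ ≠ 0 := norm_ne_zero_iff.mpr hξ
  simp only [radonChi, radonChiInv, Prod.mk.injEq]
  constructor
  · rw [smul_add, smul_neg, smul_smul, smul_smul, inv_mul_cancel₀ hn, one_smul]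
    rw [smul_smul]
    module
  · rw [smul_smul, mul_inv_cancel₀ hn, one_smul]

lemma radonChi_right (n : ℕ) :
    ∀ q : (EuclideanSpace ℝ (Fin n) × ℝ) × (EuclideanSpace ℝ (Fin n) × ℝ),
      ‖q.1.1‖ = 1 → ⟪q.1.1, q.2.1⟫ = 0 → 0 < q.2.2 →
        radonChi n (radonChiInv n q) = q := by
  rintro ⟨⟨v, r⟩, ⟨η, t⟩⟩ hv hvη ht
  have ht' : t ≠ 0 := ne_of_gt ht
  have hnorm : ‖t • v‖ = t := by
    rw [norm_smul, hv, Real.norm_eq_abs, abs_of_pos ht, mul_one]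
  have hinner : ⟪-(t⁻¹ • η) + r • v, t • v⟫ = r * t := by
    rw [inner_add_left, inner_neg_left, real_inner_smul_left, real_inner_smul_right,
      real_inner_smul_left, real_inner_smul_right, real_inner_comm v η, hvη,
      real_inner_self_eq_norm_sq, hv]
    ring
  simp only [radonChi, radonChiInv, hnorm, Prod.mk.injEq, hinner]
  refine ⟨⟨?_, ?_⟩, ?_, trivial⟩
  · rw [smul_smul, inv_mul_cancel₀ ht', one_smul]
  · rw [mul_div_assoc, div_self ht', mul_one]
  · rw [mul_div_assoc, div_self ht', mul_one, smul_add, smul_neg, smul_smul,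
      mul_inv_cancel₀ ht', one_smul, smul_smul, smul_smul]
    module

/-- χ is a bijection from {(x, ξ) : ξ ≠ 0} onto
{(n, r, η, ηᵣ) : ‖n‖ = 1, n·η = 0, ηᵣ > 0}, with the stated inverse. -/
theorem radonChi_bijOn (n : ℕ) :
    Set.BijOn (radonChi n)
      {p : EuclideanSpace ℝ (Fin n) × EuclideanSpace ℝ (Fin n) | p.2 ≠ 0}
      {q : (EuclideanSpace ℝ (Fin n) × ℝ) × (EuclideanSpace ℝ (Fin n) × ℝ) |
        ‖q.1.1‖ = 1 ∧ ⟪q.1.1, q.2.1⟫ = 0 ∧ 0 < q.2.2} ∧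
    (∀ p : EuclideanSpace ℝ (Fin n) × EuclideanSpace ℝ (Fin n),
      p.2 ≠ 0 → radonChiInv n (radonChi n p) = p) ∧
    (∀ q : (EuclideanSpace ℝ (Fin n) × ℝ) × (EuclideanSpace ℝ (Fin n) × ℝ),
      ‖q.1.1‖ = 1 → ⟪q.1.1, q.2.1⟫ = 0 → 0 < q.2.2 →
        radonChi n (radonChiInv n q) = q) := by
  refine ⟨?_, radonChi_left n, radonChi_right n⟩
  have hmapsto : Set.MapsTo (radonChi n)
      {p : EuclideanSpace ℝ (Fin n) × EuclideanSpace ℝ (Fin n) | p.2 ≠ 0}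
      {q : (EuclideanSpace ℝ (Fin n) × ℝ) × (EuclideanSpace ℝ (Fin n) × ℝ) |
        ‖q.1.1‖ = 1 ∧ ⟪q.1.1, q.2.1⟫ = 0 ∧ 0 < q.2.2} := by
    rintro ⟨x, ξ⟩ hξ
    have hξ' : (ξ : EuclideanSpace ℝ (Fin n)) ≠ 0 := hξ
    have hn : ‖ξ‖ ≠ 0 := norm_ne_zero_iff.mpr hξ'
    refine ⟨?_, ?_, norm_pos_iff.mpr hξ'⟩
    · simp [radonChi, norm_smul, abs_of_nonneg (inv_nonneg.mpr (norm_nonneg ξ)),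
        inv_mul_cancel₀ hn]
    · simp only [radonChi, inner_add_right, inner_neg_right, real_inner_smul_left,
        real_inner_smul_right, real_inner_self_eq_norm_sq, real_inner_comm ξ x]
      field_simp
      ring
  have hinv : Set.MapsTo (radonChiInv n)
      {q : (EuclideanSpace ℝ (Fin n) × ℝ) × (EuclideanSpace ℝ (Fin n) × ℝ) |
        ‖q.1.1‖ = 1 ∧ ⟪q.1.1, q.2.1⟫ = 0 ∧ 0 < q.2.2}
      {p : EuclideanSpace ℝ (Fin n) × EuclideanSpace ℝ (Fin n) | p.2 ≠ 0} := by
    rintro ⟨⟨v, r⟩, ⟨η, t⟩⟩ ⟨hv, hvη, ht⟩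
    simp only [radonChiInv, Set.mem_setOf_eq]
    intro h
    have := congrArg norm h
    rw [norm_smul, hv, Real.norm_eq_abs, abs_of_pos ht, mul_one, norm_zero] at this
    exact ne_of_gt ht this
  exact Set.InvOn.bijOn ⟨fun p hp => radonChi_left n p hp, fun q hq =>
    radonChi_right n q hq.1 hq.2.1 hq.2.2⟩ hmapsto hinv
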